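/- arXiv:2408.10847 — 2 statements merged into one kernel-verified Lean document; each statement's English description precedes it below -/
import Mathlib

section
/- For positive integers $c, d$ with $d \ge 2$, the graph $K_c \vee (d K_1)$ (the join of a complete graph on $c$ vertices with $d$ isolated vertices) satisfies $I(K_c \vee (d K_1)) = \frac{c}{d}$. -/
open SimpleGraph

noncomputable def isoCount {V : Type*} (G : SimpleGraph V) (S : Set V) : ℕ :=
  {v | v ∉ S ∧ ∀ w, G.Adj v w → w ∈ S}.ncard

noncomputable def isoTough {V : Type*} [Fintype V] (G : SimpleGraph V) : ℝ :=
  sInf {x : ℝ | ∃ S : Set V, 2 ≤ isoCount G S ∧ x = (S.ncard : ℝ) / (isoCount G S : ℝ)}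

noncomputable def isoToughVar {V : Type*} [Fintype V] (G : SimpleGraph V) : ℝ :=
  sInf {x : ℝ | ∃ S : Set V, 2 ≤ isoCount G S ∧ x = (S.ncard : ℝ) / ((isoCount G S : ℝ) - 1)}

/-- The join `K_c ∨ (d K_1)`. -/
def joinKE (c d : ℕ) : SimpleGraph (Fin c ⊕ Fin d) where
  Adj x y := x ≠ y ∧ (x.isLeft ∨ y.isLeft)
  symm := ⟨by intro x y h; tauto⟩
  loopless := ⟨by intro x h; exact h.1 rfl⟩

/-- The star `K_{1,n-1}`: join of one center with `n-1` leaves. -/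
def starGraph (n : ℕ) : SimpleGraph (Fin 1 ⊕ Fin (n-1)) := joinKE 1 (n-1)

/-- The graph `G_l = K_{l-1} ∨ (l K_k)`. -/
def Gl (k l : ℕ) : SimpleGraph (Fin (l-1) ⊕ Fin l × Fin k) where
  Adj x y := x ≠ y ∧ (x.isLeft ∨ y.isLeft ∨
    ∃ i p q, x = Sum.inr (i, p) ∧ y = Sum.inr (i, q))
  symm := ⟨by
    rintro x y ⟨h1, h2⟩
    refine ⟨h1.symm, ?_⟩
    rcases h2 with h | h | ⟨i, p, q, hx, hy⟩
    · tauto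
    · tauto
    · exact Or.inr (Or.inr ⟨i, q, p, hy, hx⟩)⟩
  loopless := ⟨fun x h => h.1 rfl⟩

noncomputable instance GlDec (k l : ℕ) : DecidableRel (Gl k l).Adj := Classical.decRel _



lemma ncard_range_sum_inl (c d : ℕ) :
    (Set.range (Sum.inl : Fin c → Fin c ⊕ Fin d)).ncard = c := by
  rw [← Nat.card_coe_set_eq, Nat.card_range_of_injective Sum.inl_injective]
  simp

lemma ncard_range_sum_inr (c d : ℕ) :
    (Set.range (Sum.inr : Fin d → Fin c ⊕ Fin d)).ncard = d := by
  rw [← Nat.card_coe_set_eq, Nat.card_range_of_injective Sum.inr_injective]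
  simp

theorem joinKE_isoTough (c d : ℕ) (hc : 1 ≤ c) (hd : 2 ≤ d) :
    isoTough (joinKE c d) = (c : ℝ) / (d : ℝ) := by
  have hd0 : (0:ℝ) < d := by exact_mod_cast Nat.lt_of_lt_of_le (by norm_num) hd
  -- witness membership
  have hiso : isoCount (joinKE c d) (Set.range Sum.inl) = d := by
    have heq : {v | v ∉ Set.range (Sum.inl : Fin c → Fin c ⊕ Fin d) ∧
        ∀ w, (joinKE c d).Adj v w → w ∈ Set.range Sum.inl} = Set.range Sum.inr := by
      ext v
      cases v with
      | inl i => simp [joinKE]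
      | inr j =>
        simp only [Set.mem_setOf_eq, Set.mem_range, joinKE]
        constructor
        · intro _; exact ⟨j, rfl⟩
        · rintro _
          refine ⟨by simp, ?_⟩
          rintro w ⟨hne, h | h⟩
          · simp at h
          · rcases w with i | j'
            · exact ⟨i, rfl⟩
            · simp at h
    rw [isoCount, heq, ncard_range_sum_inr]
  have hmem : (c:ℝ)/(d:ℝ) ∈ {x : ℝ | ∃ S : Set (Fin c ⊕ Fin d),
      2 ≤ isoCount (joinKE c d) S ∧ x = (S.ncard : ℝ) / (isoCount (joinKE c d) S : ℝ)} := by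
    exact ⟨Set.range Sum.inl, by rw [hiso]; exact hd,
      by rw [hiso, ncard_range_sum_inl]⟩
  -- lower bound
  have hlb : ∀ x ∈ {x : ℝ | ∃ S : Set (Fin c ⊕ Fin d),
      2 ≤ isoCount (joinKE c d) S ∧ x = (S.ncard : ℝ) / (isoCount (joinKE c d) S : ℝ)},
      (c:ℝ)/(d:ℝ) ≤ x := by
    rintro x ⟨S, hn2, rfl⟩
    set I := {v | v ∉ S ∧ ∀ w, (joinKE c d).Adj v w → w ∈ S} with hI
    have hleft : ∀ i : Fin c, Sum.inl i ∈ S := by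
      intro i
      by_contra hiS
      have hsub : I ⊆ {Sum.inl i} := by
        rintro v ⟨hvS, hv⟩
        by_contra hne
        have hadj : (joinKE c d).Adj v (Sum.inl i) :=
          ⟨by simpa using hne, Or.inr rfl⟩
        exact hiS (hv _ hadj)
      have := Set.ncard_le_ncard hsub (Set.finite_singleton _)
      simp only [Set.ncard_singleton] at this
      have : isoCount (joinKE c d) S ≤ 1 := this
      omega
    have hsubI : I ⊆ Set.range Sum.inr := by
      rintro v ⟨hvS, hv⟩
      cases v with
      | inl i => exact absurd (hleft i) hvS
      | inr j => exact ⟨j, rfl⟩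
    have hnd : isoCount (joinKE c d) S ≤ d := by
      have := Set.ncard_le_ncard hsubI (Set.toFinite _)
      rwa [ncard_range_sum_inr] at this
    have hcs : c ≤ S.ncard := by
      have hsub2 : Set.range (Sum.inl : Fin c → Fin c ⊕ Fin d) ⊆ S := by
        rintro v ⟨i, rfl⟩; exact hleft i
      have := Set.ncard_le_ncard hsub2 (Set.toFinite _)
      rwa [ncard_range_sum_inl] at this
    have hn0 : (0:ℝ) < (isoCount (joinKE c d) S : ℝ) := by
      exact_mod_cast Nat.lt_of_lt_of_le (by norm_num) hn2
    rw [div_le_div_iff₀ hd0 hn0]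
    have : c * isoCount (joinKE c d) S ≤ S.ncard * d :=
      le_trans (Nat.mul_le_mul_left c hnd) (Nat.mul_le_mul_right d hcs)
    exact_mod_cast this
  rw [isoTough]
  exact le_antisymm (csInf_le ⟨_, hlb⟩ hmem) (le_csInf ⟨_, hmem⟩ hlb)
end

section
/- Let $k \ge 2$ and $l \ge 2$ be integers and let $G_l = K_{l-1} \vee (l K_k)$. Then $I(G_l) = k - \frac{1}{l}$. -/
open SimpleGraph

/-! If `G_l - S` has `t ≥ 2` isolated vertices, they form an independent set `T` whose
neighbourhood lies in `S`. Since the vertices of `K_{l-1}` are universal, `T` avoids them and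
meets each copy of `K_k` at most once, so `t ≤ l` and `S` contains `K_{l-1}` together with the
`t (k - 1)` remaining vertices of the copies met by `T`. Thus
`|S| / t ≥ k - 1 + (l - 1) / t ≥ k - 1 / l`, with equality when `T` takes one vertex from every
copy of `K_k` and `S` is its complement. -/

open Set

namespace SimpleGraph

variable {V : Type*} (G : SimpleGraph V)

def isolatedSet (S : Set V) : Set V := {v | v ∉ S ∧ ∀ w, G.Adj v w → w ∈ S}

theorem isoCount_eq_ncard_isolatedSet (S : Set V) : isoCount G S = (G.isolatedSet S).ncard :=
  rfl

variable {G}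

theorem disjoint_isolatedSet (S : Set V) : Disjoint S (G.isolatedSet S) :=
  Set.disjoint_left.2 fun _ hv hvT => hvT.1 hv

theorem isIndepSet_isolatedSet (S : Set V) : G.IsIndepSet (G.isolatedSet S) :=
  fun _ hv _ hw _ hadj => hw.1 (hv.2 _ hadj)

theorem isolatedSet_compl {T : Set V} (hT : G.IsIndepSet T) : G.isolatedSet Tᶜ = T := by
  ext v
  refine ⟨fun hv => not_not.1 hv.1, fun hv => ⟨not_not.2 hv, fun w hadj hw => ?_⟩⟩
  exact hT hv hw (G.ne_of_adj hadj) hadj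

theorem isoCount_compl {T : Set V} (hT : G.IsIndepSet T) : isoCount G Tᶜ = T.ncard := by
  rw [isoCount_eq_ncard_isolatedSet, isolatedSet_compl hT]

end SimpleGraph

theorem sub_one_div_eq_div {k l s : ℕ} (hl : 0 < l) (h : s + 1 = l * k) :
    (k : ℝ) - 1 / l = s / l := by
  have h' : (s : ℝ) + 1 = l * k := by exact_mod_cast h
  field_simp
  linarith

theorem sub_one_div_le_div {k l s t : ℕ} (ht : 0 < t) (htl : t ≤ l)
    (h : l + t * k ≤ s + t + 1) :
    (k : ℝ) - 1 / l ≤ s / t := by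
  have ht' : (0 : ℝ) < t := by exact_mod_cast ht
  have hl' : (0 : ℝ) < l := by exact_mod_cast ht.trans_le htl
  have htl' : (t : ℝ) ≤ l := by exact_mod_cast htl
  have hl1 : (1 : ℝ) ≤ l := by exact_mod_cast ht.trans_le htl
  have h' : (l : ℝ) + t * k ≤ s + t + 1 := by exact_mod_cast h
  -- this is `(l - t) (l - 1) ≥ 0`
  have key : (t : ℝ) + 1 - l ≤ t / l := by
    rw [le_div_iff₀ hl']
    nlinarith [mul_nonneg (sub_nonneg.2 htl') (sub_nonneg.2 hl1)]
  rw [le_div_iff₀ ht', sub_mul, div_mul_eq_mul_div, one_mul]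
  nlinarith

namespace Gl

variable {k l : ℕ}

theorem inl_adj {a : Fin (l - 1)} {x : Fin (l - 1) ⊕ Fin l × Fin k} (h : .inl a ≠ x) :
    (Gl k l).Adj (.inl a) x :=
  ⟨h, .inl rfl⟩

theorem inr_adj_inr {i j : Fin l} {p q : Fin k} :
    (Gl k l).Adj (.inr (i, p)) (.inr (j, q)) ↔ i = j ∧ p ≠ q := by
  simp only [Gl, ne_eq, Sum.inr.injEq, Prod.mk.injEq, Sum.isLeft_inr]
  grind

theorem isIndepSet_range_inr (p : Fin k) :
    (Gl k l).IsIndepSet (range fun i => .inr (i, p)) := by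
  rintro _ ⟨i, rfl⟩ _ ⟨j, rfl⟩ - hadj
  exact (inr_adj_inr.1 hadj).2 rfl

variable {T : Set (Fin (l - 1) ⊕ Fin l × Fin k)}

theorem subset_range_inr_of_isIndepSet (hT : (Gl k l).IsIndepSet T) (h : 1 < T.ncard) :
    T ⊆ range Sum.inr := by
  rintro (a | x) ha
  · obtain ⟨v, hv, hne⟩ := exists_ne_of_one_lt_ncard h (.inl a)
    exact absurd (inl_adj hne.symm) (hT ha hv hne.symm)
  · exact ⟨x, rfl⟩

theorem injOn_fst_of_isIndepSet (hT : (Gl k l).IsIndepSet T) :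
    InjOn Prod.fst (Sum.inr ⁻¹' T) := by
  rintro ⟨i, p⟩ hp ⟨j, q⟩ hq (rfl : i = j)
  by_contra hne
  exact hT hp hq (by simpa using hne) (inr_adj_inr.2 ⟨rfl, fun h => hne (by rw [h])⟩)

theorem ncard_eq_ncard_blocks_of_isIndepSet (hT : (Gl k l).IsIndepSet T) (h : 1 < T.ncard) :
    T.ncard = (Prod.fst '' (Sum.inr ⁻¹' T)).ncard := by
  rw [(injOn_fst_of_isIndepSet hT).ncard_image,
    ncard_preimage_of_injective_subset_range Sum.inr_injective
      (subset_range_inr_of_isIndepSet hT h)]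

variable {S : Set (Fin (l - 1) ⊕ Fin l × Fin k)}

theorem isoCount_le (h : 2 ≤ isoCount (Gl k l) S) : isoCount (Gl k l) S ≤ l := by
  rw [isoCount_eq_ncard_isolatedSet] at h ⊢
  rw [ncard_eq_ncard_blocks_of_isIndepSet (isIndepSet_isolatedSet S) h]
  exact (ncard_le_card _).trans_eq (Nat.card_fin l)

theorem le_ncard_add_isoCount (h : 2 ≤ isoCount (Gl k l) S) :
    l - 1 + isoCount (Gl k l) S * k ≤ S.ncard + isoCount (Gl k l) S := by
  rw [isoCount_eq_ncard_isolatedSet] at h ⊢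
  set T := (Gl k l).isolatedSet S
  set B := Prod.fst '' (Sum.inr ⁻¹' T)
  have hTB : T.ncard = B.ncard :=
    ncard_eq_ncard_blocks_of_isIndepSet (isIndepSet_isolatedSet S) h
  -- the closed neighbourhood of `T`
  have hsub : range Sum.inl ∪ Sum.inr '' (B ×ˢ univ) ⊆ S ∪ T := by
    rintro _ (⟨a, rfl⟩ | ⟨⟨i, q⟩, ⟨⟨⟨j, p⟩, hp, hji⟩, -⟩, rfl⟩)
    · obtain ⟨v, hv, hne⟩ := exists_ne_of_one_lt_ncard h (.inl a)
      exact .inl (hv.2 _ (inl_adj hne.symm).symm)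
    · obtain rfl : j = i := hji
      rcases eq_or_ne p q with rfl | hpq
      · exact .inr hp
      · exact .inl (hp.2 _ (inr_adj_inr.2 ⟨rfl, hpq⟩))
  calc l - 1 + T.ncard * k = (range Sum.inl ∪ Sum.inr '' (B ×ˢ univ)).ncard := by
        rw [ncard_union_eq disjoint_range_inl_image_inr, ncard_range_of_injective Sum.inl_injective,
          ncard_image_of_injective _ Sum.inr_injective, ncard_prod, ncard_univ, hTB]
        simp
    _ ≤ (S ∪ T).ncard := ncard_le_ncard hsub
    _ = S.ncard + T.ncard := ncard_union_eq (disjoint_isolatedSet S)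

theorem exists_isoCount_eq (hk : 0 < k) :
    ∃ S, isoCount (Gl k l) S = l ∧ S.ncard + l = l - 1 + l * k := by
  set T := range fun i => (.inr (i, ⟨0, hk⟩) : Fin (l - 1) ⊕ Fin l × Fin k)
  have hT : T.ncard = l := by
    rw [ncard_range_of_injective fun i j h => by simpa using h, Nat.card_fin]
  refine ⟨Tᶜ, by rw [isoCount_compl (isIndepSet_range_inr _), hT], ?_⟩
  simpa [hT] using ncard_compl_add_ncard T

end Gl

theorem Gl_isoTough (k l : ℕ) (hk : 2 ≤ k) (hl : 2 ≤ l) :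
    isoTough (Gl k l) = (k : ℝ) - 1 / (l : ℝ) := by
  refine IsLeast.csInf_eq ⟨?_, ?_⟩
  · obtain ⟨S, hcount, hcard⟩ := Gl.exists_isoCount_eq (k := k) (l := l) (by omega)
    refine ⟨S, by omega, ?_⟩
    rw [hcount]
    exact sub_one_div_eq_div (by omega) (by lia)
  · rintro _ ⟨S, hS, rfl⟩
    have hcard := Gl.le_ncard_add_isoCount hS
    exact sub_one_div_le_div (by omega) (Gl.isoCount_le hS) (by omega)
end
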